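/- arXiv:1810.03904 — 2 statements merged into one kernel-verified Lean document; each statement's English description precedes it below -/
import Mathlib

section
/- Let H be a graph with χρ(H) = k and let u, v be nonadjacent vertices of H. If H is not k-χρ-critical, then the graph H + uv obtained by adding the edge uv is not k-χρ-critical. -/
open SimpleGraph

/-- A packing coloring of `G` with colors `1,…,k`: vertices with the same
color `i` are pairwise at (shortest-path) distance greater than `i`. -/
def IsPackingColoring {V : Type*} (G : SimpleGraph V) (k : ℕ) (c : V → ℕ) : Prop :=
  (∀ v, c v ∈ Finset.Icc 1 k) ∧
    ∀ u v : V, u ≠ v → c u = c v → (c u : ℕ∞) < G.edist u v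

/-- The packing chromatic number `χρ(G)`. -/
noncomputable def packingChromatic {V : Type*} (G : SimpleGraph V) : ℕ :=
  sInf {k | ∃ c : V → ℕ, IsPackingColoring G k c}

/-- The vertex-deleted subgraph `G - x`. -/
abbrev deleteVert {V : Type*} (G : SimpleGraph V) (x : V) : SimpleGraph {v : V // v ≠ x} :=
  G.induce {v : V | v ≠ x}

lemma packingColoring_of_le {V : Type*} {G G' : SimpleGraph V} (h : G ≤ G')
    {k : ℕ} {c : V → ℕ} (hc : IsPackingColoring G' k c) : IsPackingColoring G k c := by
  refine ⟨hc.1, fun a b hab hcab => ?_⟩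
  exact lt_of_lt_of_le (hc.2 a b hab hcab) (SimpleGraph.edist_anti h)

lemma packingChromatic_nonempty {V : Type*} [Fintype V] (G : SimpleGraph V) :
    {k | ∃ c : V → ℕ, IsPackingColoring G k c}.Nonempty := by
  classical
  refine ⟨Fintype.card V, fun v => (Fintype.equivFin V v : ℕ) + 1, fun v => ?_, ?_⟩
  · simp only [Finset.mem_Icc]
    exact ⟨Nat.le_add_left 1 _, Nat.succ_le_of_lt (Fintype.equivFin V v).2⟩
  · intro a b hab hcab
    exact absurd (Fintype.equivFin V |>.injective (Fin.ext (Nat.succ_injective hcab))) hab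

lemma packingChromatic_mono {V : Type*} [Fintype V] {G G' : SimpleGraph V} (h : G ≤ G') :
    packingChromatic G ≤ packingChromatic G' := by
  have hne := packingChromatic_nonempty G'
  have hmem := Nat.sInf_mem hne
  obtain ⟨c, hc⟩ := hmem
  exact Nat.sInf_le ⟨c, packingColoring_of_le h hc⟩

/-- If `χρ(H) = k`, `u` and `v` are nonadjacent in `H`, and `H` is not
`k`-`χρ`-critical, then `H + uv` is not `k`-`χρ`-critical. -/
theorem stmt_6 {V : Type*} [Fintype V] (H : SimpleGraph V) (k : ℕ) (u v : V)
    (huv : u ≠ v) (hadj : ¬ H.Adj u v) (hk : packingChromatic H = k)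
    (hnc : ¬ (packingChromatic H = k ∧
      ∀ x : V, packingChromatic (deleteVert H x) < k)) :
    ¬ (packingChromatic (H ⊔ SimpleGraph.edge u v) = k ∧
      ∀ x : V, packingChromatic (deleteVert (H ⊔ SimpleGraph.edge u v) x) < k) := by
  classical
  rintro ⟨hk', hall⟩
  apply hnc
  refine ⟨hk, fun x => ?_⟩
  have hle : deleteVert H x ≤ deleteVert (H ⊔ SimpleGraph.edge u v) x := by
    intro a b hab
    exact Or.inl hab
  exact lt_of_le_of_lt (packingChromatic_mono hle) (hall x)
end

section
/- The Petersen graph P satisfies χρ(P) = 7 and χρ(P − x) = 5 for every vertex x; in particular, χρ(P) − χρ(P − x) = 2 for all x. -/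
open SimpleGraph
set_option synthInstance.maxHeartbeats 2000000
set_option synthInstance.maxSize 2000
set_option maxHeartbeats 2000000
set_option maxRecDepth 20000

/-- The Petersen graph, as the Kneser graph `K(5,2)`. -/
def petersen : SimpleGraph {s : Finset (Fin 5) // s.card = 2} :=
  SimpleGraph.fromRel (fun a b => Disjoint a.1 b.1)

/-! ### auxiliary general lemmas -/

section General

variable {V W : Type*} {G : SimpleGraph V} {H : SimpleGraph W}

lemma lt_edist_of_forall_walk {u v : V} (n : ℕ) (h : ∀ p : G.Walk u v, n < p.length) :
    (n : ℕ∞) < G.edist u v := by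
  by_contra hc
  push_neg at hc
  have hne : G.edist u v ≠ ⊤ := fun ht => by simp [ht] at hc
  obtain ⟨p, hp⟩ := SimpleGraph.exists_walk_of_edist_ne_top hne
  have h1 := h p
  have h2 : (n : ℕ∞) < (p.length : ℕ∞) := by exact_mod_cast h1
  rw [hp] at h2
  exact absurd hc h2.not_ge

lemma one_lt_edist {u v : V} (hne : u ≠ v) (hna : ¬ G.Adj u v) : (1 : ℕ∞) < G.edist u v := by
  have h := lt_edist_of_forall_walk (G := G) (u := u) (v := v) 1 ?_
  · exact_mod_cast h
  intro p
  match p with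
  | SimpleGraph.Walk.nil => exact absurd rfl hne
  | SimpleGraph.Walk.cons h q =>
    match q with
    | SimpleGraph.Walk.nil => exact absurd h hna
    | SimpleGraph.Walk.cons h2 q2 => simp [SimpleGraph.Walk.length_cons]

lemma two_lt_edist {u v : V} (hne : u ≠ v) (hna : ¬ G.Adj u v)
    (h2 : ∀ w, ¬ (G.Adj u w ∧ G.Adj w v)) : (2 : ℕ∞) < G.edist u v := by
  have h := lt_edist_of_forall_walk (G := G) (u := u) (v := v) 2 ?_
  · exact_mod_cast h
  intro p
  match p with
  | SimpleGraph.Walk.nil => exact absurd rfl hne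
  | SimpleGraph.Walk.cons h q =>
    match q with
    | SimpleGraph.Walk.nil => exact absurd h hna
    | SimpleGraph.Walk.cons h2' q2 =>
      match q2 with
      | SimpleGraph.Walk.nil => exact absurd ⟨h, h2'⟩ (h2 _)
      | SimpleGraph.Walk.cons h3 q3 => simp [SimpleGraph.Walk.length_cons]

lemma edist_le_one_of_adj {u v : V} (h : G.Adj u v) : G.edist u v ≤ 1 :=
  (SimpleGraph.edist_eq_one_iff_adj.mpr h).le

lemma edist_le_two_of {u w v : V} (h1 : G.Adj u w) (h2 : G.Adj w v) : G.edist u v ≤ 2 := by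
  have h := SimpleGraph.edist_le (Walk.cons h1 (Walk.cons h2 Walk.nil))
  simpa using h

lemma edist_le_three_of {u w z v : V} (h1 : G.Adj u w) (h2 : G.Adj w z) (h3 : G.Adj z v) :
    G.edist u v ≤ 3 := by
  have h := SimpleGraph.edist_le (Walk.cons h1 (Walk.cons h2 (Walk.cons h3 Walk.nil)))
  simpa using h

lemma edist_iso_le (e : G ≃g H) (u v : V) : H.edist (e u) (e v) ≤ G.edist u v := by
  rcases eq_or_ne (G.edist u v) ⊤ with h | h
  · rw [h]; exact le_top
  · obtain ⟨p, hp⟩ := SimpleGraph.exists_walk_of_edist_ne_top h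
    calc H.edist (e u) (e v) ≤ ((p.map e.toHom).length : ℕ∞) := SimpleGraph.edist_le _
      _ = G.edist u v := by rw [SimpleGraph.Walk.length_map, hp]

lemma edist_iso (e : G ≃g H) (u v : V) : H.edist (e u) (e v) = G.edist u v := by
  refine le_antisymm (edist_iso_le e u v) ?_
  have h := edist_iso_le e.symm (e u) (e v)
  simpa using h

lemma isPackingColoring_iso (e : G ≃g H) {k : ℕ} {c : W → ℕ}
    (h : IsPackingColoring H k c) : IsPackingColoring G k (c ∘ e) := by
  refine ⟨fun v => h.1 (e v), fun u v huv hc => ?_⟩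
  have h2 := h.2 (e u) (e v) (fun hh => huv (e.toEquiv.injective hh)) hc
  rwa [edist_iso e u v] at h2

lemma packingChromatic_iso (e : G ≃g H) : packingChromatic G = packingChromatic H := by
  unfold packingChromatic
  congr 1
  ext k
  exact ⟨fun ⟨c, hc⟩ => ⟨c ∘ e.symm, isPackingColoring_iso e.symm hc⟩,
    fun ⟨c, hc⟩ => ⟨c ∘ e, isPackingColoring_iso e hc⟩⟩

lemma isPackingColoring_mono {k k' : ℕ} {c : V → ℕ} (h : IsPackingColoring G k c)
    (hk : k ≤ k') : IsPackingColoring G k' c := by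
  refine ⟨fun v => ?_, h.2⟩
  have h1 := h.1 v
  simp only [Finset.mem_Icc] at h1 ⊢
  omega

lemma packingChromatic_eq {k : ℕ} (hk : 0 < k)
    (h1 : ∃ c, IsPackingColoring G k c)
    (h2 : ¬ ∃ c, IsPackingColoring G (k - 1) c) : packingChromatic G = k := by
  refine le_antisymm (Nat.sInf_le h1) (le_csInf ⟨k, h1⟩ ?_)
  rintro j ⟨c, hc⟩
  by_contra hj
  push_neg at hj
  exact h2 ⟨c, isPackingColoring_mono hc (by omega)⟩

lemma pack_not_adj {k : ℕ} {c : V → ℕ} (h : IsPackingColoring G k c) {u v : V}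
    (hne : u ≠ v) (hc : c u = c v) : ¬ G.Adj u v := by
  intro ha
  have h1 := h.2 u v hne hc
  rw [SimpleGraph.edist_eq_one_iff_adj.mpr ha] at h1
  have h2 : 1 ≤ c u := (Finset.mem_Icc.mp (h.1 u)).1
  have h3 : (1 : ℕ∞) ≤ (c u : ℕ∞) := by exact_mod_cast h2
  exact absurd h1 h3.not_gt

/-- Isomorphic graphs have isomorphic vertex-deleted subgraphs. -/
def deleteVertIso (e : G ≃g H) (x : V) : deleteVert G x ≃g deleteVert H (e x) where
  toEquiv := e.toEquiv.subtypeEquiv (fun v => (e.toEquiv.injective.ne_iff).symm)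
  map_rel_iff' := by
    intro a b
    exact e.map_rel_iff'

end General

/-! ### finset extraction helpers -/

section Extract

variable {α : Type*} [LinearOrder α] [DecidableEq α]

lemma extract_min {s : Finset α} (h : 0 < s.card) :
    ∃ a ∈ s, (∀ b ∈ s.erase a, a < b) ∧ (s.erase a).card = s.card - 1 := by
  have hne : s.Nonempty := Finset.card_pos.mp h
  refine ⟨s.min' hne, s.min'_mem hne, fun b hb => ?_, Finset.card_erase_of_mem (s.min'_mem hne)⟩
  exact (s.min'_le b (Finset.mem_of_mem_erase hb)).lt_of_ne (Finset.ne_of_mem_erase hb).symm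

lemma exists_sorted_four {s : Finset α} (h : 4 ≤ s.card) :
    ∃ a b c d, a ∈ s ∧ b ∈ s ∧ c ∈ s ∧ d ∈ s ∧ a < b ∧ b < c ∧ c < d := by
  obtain ⟨a, haS, haMin, hac⟩ := extract_min (s := s) (by omega)
  obtain ⟨b, hbS, hbMin, hbc⟩ := extract_min (s := s.erase a) (by omega)
  obtain ⟨cc, hcS, hcMin, hcc⟩ := extract_min (s := (s.erase a).erase b) (by omega)
  obtain ⟨d, hdS, _, _⟩ := extract_min (s := ((s.erase a).erase b).erase cc) (by omega)
  refine ⟨a, b, cc, d, haS, Finset.mem_of_mem_erase hbS,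
    Finset.mem_of_mem_erase (Finset.mem_of_mem_erase hcS),
    Finset.mem_of_mem_erase (Finset.mem_of_mem_erase (Finset.mem_of_mem_erase hdS)),
    haMin b hbS, hbMin cc hcS, hcMin d hdS⟩

lemma exists_sorted_five {s : Finset α} (h : 5 ≤ s.card) :
    ∃ a b c d e, a ∈ s ∧ b ∈ s ∧ c ∈ s ∧ d ∈ s ∧ e ∈ s ∧ a < b ∧ b < c ∧ c < d ∧ d < e := by
  obtain ⟨a, haS, haMin, hac⟩ := extract_min (s := s) (by omega)
  obtain ⟨b, c, d, e, hb, hc, hd, he, h1, h2, h3⟩ :=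
    exists_sorted_four (s := s.erase a) (by omega)
  exact ⟨a, b, c, d, e, haS, Finset.mem_of_mem_erase hb, Finset.mem_of_mem_erase hc,
    Finset.mem_of_mem_erase hd, Finset.mem_of_mem_erase he, haMin b hb, h1, h2, h3⟩

end Extract

/-! ### the Petersen graph on `Fin 10` -/

def adjL : List (ℕ × ℕ) :=
  [(0,7),(0,8),(0,9),(1,5),(1,6),(1,9),(2,4),(2,6),(2,8),(3,4),(3,5),(3,7),(4,9),(5,8),(6,7)]

def adjB (i j : Fin 10) : Bool := decide ((i.1, j.1) ∈ adjL) || decide ((j.1, i.1) ∈ adjL)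

def P10 : SimpleGraph (Fin 10) := SimpleGraph.fromRel (fun i j => adjB i j = true)

instance : DecidableRel P10.Adj := fun i j => by unfold P10; exact instDecidableAnd

instance : DecidableRel petersen.Adj := fun a b => by unfold petersen; exact instDecidableAnd

/-- diameter of `P10` is at most 2. -/
lemma A2 : ∀ u v : Fin 10, u = v ∨ P10.Adj u v ∨ ∃ w, P10.Adj u w ∧ P10.Adj w v := by decide

/-- diameter of `P10 - x` is at most 3. -/
lemma A3 : ∀ x u v : Fin 10, u ≠ x → v ≠ x → (u = v ∨ P10.Adj u v ∨
    (∃ w, w ≠ x ∧ P10.Adj u w ∧ P10.Adj w v) ∨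
    (∃ w z, w ≠ x ∧ z ≠ x ∧ P10.Adj u w ∧ P10.Adj w z ∧ P10.Adj z v)) := by decide

/-- independence number of `P10` is at most 4. -/
lemma B10 : ∀ a b : Fin 10, a < b → ∀ c, b < c → ∀ d, c < d → ∀ e, d < e →
    (¬ P10.Adj a b ∧ ¬ P10.Adj a c ∧ ¬ P10.Adj a d ∧ ¬ P10.Adj a e ∧
     ¬ P10.Adj b c ∧ ¬ P10.Adj b d ∧ ¬ P10.Adj b e ∧ ¬ P10.Adj c d ∧ ¬ P10.Adj c e ∧
     ¬ P10.Adj d e) → False := by decide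

/-- no independent 4-set avoids a closed neighborhood. -/
lemma G10 : ∀ a b : Fin 10, a < b → ∀ c, b < c → ∀ d, c < d → ∀ x,
    (a ≠ x ∧ b ≠ x ∧ c ≠ x ∧ d ≠ x) →
    (¬ P10.Adj a b ∧ ¬ P10.Adj a c ∧ ¬ P10.Adj a d ∧ ¬ P10.Adj b c ∧ ¬ P10.Adj b d ∧
     ¬ P10.Adj c d) →
    (¬ P10.Adj x a ∧ ¬ P10.Adj x b ∧ ¬ P10.Adj x c ∧ ¬ P10.Adj x d) → False := by decide

/-- pairs at distance 3 in `P10 - x` are pairs of neighbors of `x`. -/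
lemma F10 : ∀ x u v : Fin 10, u ≠ x → v ≠ x → u ≠ v → ¬ P10.Adj u v →
    (∀ w, w ≠ x → ¬ (P10.Adj u w ∧ P10.Adj w v)) → P10.Adj x u ∧ P10.Adj x v := by decide

lemma Nx10 : ∀ x : Fin 10, (Finset.univ.filter (fun v => P10.Adj x v)).card = 3 := by decide

/-! ### explicit colorings -/

def c10 : Fin 10 → ℕ := ![1,1,1,1,2,3,4,5,6,7]

lemma U7a : ∀ v : Fin 10, 1 ≤ c10 v ∧ c10 v ≤ 7 := by decide

lemma U7b : ∀ u v : Fin 10, u ≠ v → c10 u = c10 v → c10 u = 1 ∧ ¬ P10.Adj u v := by decide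

def col5 : Fin 10 → Fin 10 → ℕ :=
  ![![1,1,1,1,3,4,5,2,2,2],
    ![1,1,1,1,3,2,2,4,5,2],
    ![1,1,1,1,2,3,2,4,2,5],
    ![1,1,1,1,2,2,3,2,4,5],
    ![1,3,2,2,1,1,1,4,5,2],
    ![1,2,3,2,1,1,1,4,2,5],
    ![1,2,2,3,1,1,1,2,4,5],
    ![2,1,3,2,1,4,2,1,1,5],
    ![2,1,2,3,1,2,4,1,1,5],
    ![2,2,1,3,2,1,4,1,5,1]]

lemma U5a : ∀ y v : Fin 10, 1 ≤ col5 y v ∧ col5 y v ≤ 5 := by decide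

lemma U5b : ∀ y u v : Fin 10, u ≠ y → v ≠ y → u ≠ v → col5 y u = col5 y v →
    (col5 y u = 1 ∧ ¬ P10.Adj u v) ∨
    (col5 y u = 2 ∧ ¬ P10.Adj u v ∧ ∀ w, w ≠ y → ¬ (P10.Adj u w ∧ P10.Adj w v)) := by decide

/-! ### packing chromatic number of P10 -/

lemma up7 : IsPackingColoring P10 7 c10 := by
  constructor
  · intro v
    rw [Finset.mem_Icc]
    exact U7a v
  · intro u v huv hc
    obtain ⟨h1, h2⟩ := U7b u v huv hc
    rw [h1]
    exact_mod_cast one_lt_edist huv h2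

lemma no6 : ¬ ∃ c : Fin 10 → ℕ, IsPackingColoring P10 6 c := by
  rintro ⟨c, hmem, hpack⟩
  classical
  set C : ℕ → Finset (Fin 10) := fun i => Finset.univ.filter (fun v => c v = i) with hC
  have hmemC : ∀ {v i}, v ∈ C i → c v = i := by
    intro v i hv
    exact (Finset.mem_filter.mp hv).2
  -- fibers
  have hcard : (Finset.univ : Finset (Fin 10)).card
      = ∑ i ∈ Finset.Icc 1 6, (C i).card :=
    Finset.card_eq_sum_card_fiberwise (fun v _ => hmem v)
  have hIcc : (Finset.Icc 1 6 : Finset ℕ) = {1,2,3,4,5,6} := by decide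
  rw [hIcc] at hcard
  rw [Finset.sum_insert (by decide), Finset.sum_insert (by decide), Finset.sum_insert (by decide),
    Finset.sum_insert (by decide), Finset.sum_insert (by decide), Finset.sum_singleton] at hcard
  have h10 : (Finset.univ : Finset (Fin 10)).card = 10 := by decide
  -- classes of colors ≥ 2 are singletons
  have hsmall : ∀ i, 2 ≤ i → (C i).card ≤ 1 := by
    intro i hi
    rw [Finset.card_le_one]
    intro a ha b hb
    by_contra hab
    have hca : c a = i := hmemC ha
    have hcb : c b = i := hmemC hb
    have hlt := hpack a b hab (hca.trans hcb.symm)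
    rw [hca] at hlt
    have h2i : (2 : ℕ∞) ≤ (i : ℕ∞) := by exact_mod_cast hi
    have hne2 : (2 : ℕ∞) < P10.edist a b := lt_of_le_of_lt h2i hlt
    rcases A2 a b with h | h | ⟨w, hw1, hw2⟩
    · exact hab h
    · exact absurd ((edist_le_one_of_adj h).trans (by norm_num)) hne2.not_ge
    · exact absurd (edist_le_two_of hw1 hw2) hne2.not_ge
  -- color 1 class is independent of size ≤ 4
  have hbig : (C 1).card ≤ 4 := by
    by_contra hcon
    push_neg at hcon
    obtain ⟨a, b, cc, d, e, ha, hb, hcc, hd, he, hab, hbc, hcd, hde⟩ :=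
      exists_sorted_five (s := C 1) (by omega)
    have hnadj : ∀ {u v : Fin 10}, u ∈ C 1 → v ∈ C 1 → u ≠ v → ¬ P10.Adj u v := by
      intro u v hu hv huv
      exact pack_not_adj ⟨hmem, hpack⟩ huv ((hmemC hu).trans (hmemC hv).symm)
    have hac := hab.trans hbc
    have had := hac.trans hcd
    have hae := had.trans hde
    have hbd := hbc.trans hcd
    have hbe := hbd.trans hde
    have hce := hcd.trans hde
    exact B10 a b hab cc hbc d hcd e hde
      ⟨hnadj ha hb hab.ne, hnadj ha hcc hac.ne, hnadj ha hd had.ne, hnadj ha he hae.ne,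
       hnadj hb hcc hbc.ne, hnadj hb hd hbd.ne, hnadj hb he hbe.ne,
       hnadj hcc hd hcd.ne, hnadj hcc he hce.ne, hnadj hd he hde.ne⟩
  have h2 := hsmall 2 (by norm_num)
  have h3 := hsmall 3 (by norm_num)
  have h4 := hsmall 4 (by norm_num)
  have h5 := hsmall 5 (by norm_num)
  have h6 := hsmall 6 (by norm_num)
  omega

lemma pc10 : packingChromatic P10 = 7 :=
  packingChromatic_eq (by norm_num) ⟨c10, up7⟩ (by exact_mod_cast no6)

/-! ### packing chromatic number of P10 - x -/

lemma up5 (x : Fin 10) : IsPackingColoring (deleteVert P10 x) 5 (fun v => col5 x v.1) := by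
  constructor
  · intro v
    rw [Finset.mem_Icc]
    exact U5a x v.1
  · intro u v huv hc
    have hvne : u.1 ≠ v.1 := fun h => huv (Subtype.ext h)
    rcases U5b x u.1 v.1 u.2 v.2 hvne hc with ⟨h1, h2⟩ | ⟨h1, h2, h3⟩
    · show ((col5 x u.1 : ℕ) : ℕ∞) < _
      rw [h1]
      exact_mod_cast one_lt_edist huv (show ¬ P10.Adj u.1 v.1 from h2)
    · show ((col5 x u.1 : ℕ) : ℕ∞) < _
      rw [h1]
      refine (by norm_num : ((2 : ℕ) : ℕ∞) = (2 : ℕ∞)) ▸ two_lt_edist huv h2 ?_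
      intro w hw
      exact h3 w.1 w.2 hw

lemma no4 (x : Fin 10) : ¬ ∃ c, IsPackingColoring (deleteVert P10 x) 4 c := by
  rintro ⟨c, hmem, hpack⟩
  classical
  set C : ℕ → Finset {v : Fin 10 // v ≠ x} := fun i => Finset.univ.filter (fun v => c v = i)
    with hC
  have hmemC : ∀ {v i}, v ∈ C i → c v = i := by
    intro v i hv
    exact (Finset.mem_filter.mp hv).2
  have hmemC' : ∀ {v i}, c v = i → v ∈ C i := by
    intro v i hv
    exact Finset.mem_filter.mpr ⟨Finset.mem_univ v, hv⟩
  have hcard : (Finset.univ : Finset {v : Fin 10 // v ≠ x}).card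
      = ∑ i ∈ Finset.Icc 1 4, (C i).card :=
    Finset.card_eq_sum_card_fiberwise (fun v _ => hmem v)
  have hIcc : (Finset.Icc 1 4 : Finset ℕ) = {1,2,3,4} := by decide
  rw [hIcc] at hcard
  rw [Finset.sum_insert (by decide), Finset.sum_insert (by decide), Finset.sum_insert (by decide),
    Finset.sum_singleton] at hcard
  have h9 : (Finset.univ : Finset {v : Fin 10 // v ≠ x}).card = 9 := by
    rw [Finset.card_univ]
    have h := Fintype.card_subtype_compl (fun v : Fin 10 => v = x)
    rw [Fintype.card_subtype_eq, Fintype.card_fin] at h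
    exact h
  -- distance in the deleted graph is at most 3
  have ed3 : ∀ u v : {v : Fin 10 // v ≠ x}, u ≠ v → (deleteVert P10 x).edist u v ≤ 3 := by
    intro u v huv
    rcases A3 x u.1 v.1 u.2 v.2 with h | h | ⟨w, hw, h1, h2⟩ | ⟨w, z, hw, hz, h1, h2, h3⟩
    · exact absurd (Subtype.ext h) huv
    · exact (edist_le_one_of_adj (show (deleteVert P10 x).Adj u v from h)).trans (by norm_num)
    · exact (edist_le_two_of (w := ⟨w, hw⟩) (show (deleteVert P10 x).Adj u ⟨w, hw⟩ from h1)
        (show (deleteVert P10 x).Adj ⟨w, hw⟩ v from h2)).trans (by norm_num)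
    · exact edist_le_three_of (w := ⟨w, hw⟩) (z := ⟨z, hz⟩)
        (show (deleteVert P10 x).Adj u ⟨w, hw⟩ from h1)
        (show (deleteVert P10 x).Adj ⟨w, hw⟩ ⟨z, hz⟩ from h2)
        (show (deleteVert P10 x).Adj ⟨z, hz⟩ v from h3)
  -- classes of colors ≥ 3 are singletons
  have hsmall : ∀ i, 3 ≤ i → (C i).card ≤ 1 := by
    intro i hi
    rw [Finset.card_le_one]
    intro a ha b hb
    by_contra hab
    have hlt := hpack a b hab (((hmemC ha)).trans (hmemC hb).symm)
    rw [hmemC ha] at hlt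
    have h3i : (3 : ℕ∞) ≤ (i : ℕ∞) := by exact_mod_cast hi
    exact absurd (ed3 a b hab) (lt_of_le_of_lt h3i hlt).not_ge
  -- color 1 class is independent of size ≤ 4
  have hnadj : ∀ {u v : {v : Fin 10 // v ≠ x}} {i}, u ∈ C i → v ∈ C i → u ≠ v →
      ¬ P10.Adj u.1 v.1 := by
    intro u v i hu hv huv
    exact pack_not_adj ⟨hmem, hpack⟩ huv ((hmemC hu).trans (hmemC hv).symm)
  have hb4 : (C 1).card ≤ 4 := by
    by_contra hcon
    push_neg at hcon
    obtain ⟨a, b, cc, d, e, ha, hb, hcc, hd, he, hab, hbc, hcd, hde⟩ :=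
      exists_sorted_five (s := C 1) (by omega)
    have hac := hab.trans hbc
    have had := hac.trans hcd
    have hae := had.trans hde
    have hbd := hbc.trans hcd
    have hbe := hbd.trans hde
    have hce := hcd.trans hde
    have hv : ∀ {u v : {v : Fin 10 // v ≠ x}}, u < v → u.1 < v.1 := fun h => h
    exact B10 a.1 b.1 (hv hab) cc.1 (hv hbc) d.1 (hv hcd) e.1 (hv hde)
      ⟨hnadj ha hb hab.ne, hnadj ha hcc hac.ne, hnadj ha hd had.ne, hnadj ha he hae.ne,
       hnadj hb hcc hbc.ne, hnadj hb hd hbd.ne, hnadj hb he hbe.ne,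
       hnadj hcc hd hcd.ne, hnadj hcc he hce.ne, hnadj hd he hde.ne⟩
  have h3 := hsmall 3 (by norm_num)
  have h4 := hsmall 4 (by norm_num)
  -- the color 2 class has at least 3 elements
  have hc2 : 3 ≤ (C 2).card := by omega
  -- all elements of the color 2 class are neighbors of x
  have hC2nbr : ∀ u ∈ C 2, P10.Adj x u.1 := by
    intro u hu
    obtain ⟨s, hs, t, ht, hst⟩ := Finset.one_lt_card.mp (by omega : 1 < (C 2).card)
    have key : ∀ t' ∈ C 2, t' ≠ u → P10.Adj x u.1 := by
      intro t' ht' htu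
      have hlt := hpack t' u htu ((hmemC ht').trans (hmemC hu).symm)
      rw [hmemC ht'] at hlt
      have h2lt : (2 : ℕ∞) < (deleteVert P10 x).edist t' u := by
        refine lt_of_le_of_lt ?_ hlt
        norm_num
      have hne : t'.1 ≠ u.1 := fun h => htu (Subtype.ext h)
      have hnad : ¬ P10.Adj t'.1 u.1 := by
        intro had
        exact absurd ((edist_le_one_of_adj (show (deleteVert P10 x).Adj t' u from had)).trans
          (by norm_num)) h2lt.not_ge
      have hcommon : ∀ w, w ≠ x → ¬ (P10.Adj t'.1 w ∧ P10.Adj w u.1) := by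
        intro w hw ⟨hw1, hw2⟩
        exact absurd (edist_le_two_of (w := ⟨w, hw⟩)
          (show (deleteVert P10 x).Adj t' ⟨w, hw⟩ from hw1)
          (show (deleteVert P10 x).Adj ⟨w, hw⟩ u from hw2)) h2lt.not_ge
      exact (F10 x t'.1 u.1 t'.2 u.2 hne hnad hcommon).2
    by_cases hsu : s = u
    · exact key t ht (fun h => hst (h ▸ hsu ▸ rfl))
    · exact key s hs hsu
  -- hence |C 2| ≤ 3, so |C 2| = 3 and |C 1| = 4
  have hD2 : (C 2).image Subtype.val ⊆ Finset.univ.filter (fun v => P10.Adj x v) := by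
    intro w hw
    obtain ⟨u, hu, huw⟩ := Finset.mem_image.mp hw
    exact Finset.mem_filter.mpr ⟨Finset.mem_univ _, huw ▸ hC2nbr u hu⟩
  have hcardD2 : ((C 2).image Subtype.val).card = (C 2).card :=
    Finset.card_image_of_injective _ Subtype.val_injective
  have hc2le : (C 2).card ≤ 3 := by
    have := Finset.card_le_card hD2
    rw [hcardD2, Nx10 x] at this
    exact this
  have hc2eq : (C 2).card = 3 := le_antisymm hc2le hc2
  have hD2eq : (C 2).image Subtype.val = Finset.univ.filter (fun v => P10.Adj x v) := by
    apply Finset.eq_of_subset_of_card_le hD2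
    rw [hcardD2, Nx10 x, hc2eq]
  have hb4' : 4 ≤ (C 1).card := by omega
  -- extract an independent 4-set avoiding the closed neighborhood of x
  obtain ⟨a, b, cc, d, ha, hb, hcc, hd, hab, hbc, hcd⟩ :=
    exists_sorted_four (s := C 1) hb4'
  have hnbr : ∀ {u : {v : Fin 10 // v ≠ x}}, u ∈ C 1 → ¬ P10.Adj x u.1 := by
    intro u hu hadj
    have : u.1 ∈ (C 2).image Subtype.val := by
      rw [hD2eq]
      exact Finset.mem_filter.mpr ⟨Finset.mem_univ _, hadj⟩
    obtain ⟨u', hu', huu⟩ := Finset.mem_image.mp this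
    have : u' = u := Subtype.ext huu
    rw [this] at hu'
    have h1 := hmemC hu
    have h2 := hmemC hu'
    omega
  have hac := hab.trans hbc
  have had := hac.trans hcd
  have hbd := hbc.trans hcd
  have hv : ∀ {u v : {v : Fin 10 // v ≠ x}}, u < v → u.1 < v.1 := fun h => h
  exact G10 a.1 b.1 (hv hab) cc.1 (hv hbc) d.1 (hv hcd) x
    ⟨a.2, b.2, cc.2, d.2⟩
    ⟨hnadj ha hb hab.ne, hnadj ha hcc hac.ne, hnadj ha hd had.ne,
     hnadj hb hcc hbc.ne, hnadj hb hd hbd.ne, hnadj hcc hd hcd.ne⟩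
    ⟨hnbr ha, hnbr hb, hnbr hcc, hnbr hd⟩

lemma pc10x (x : Fin 10) : packingChromatic (deleteVert P10 x) = 5 :=
  packingChromatic_eq (by norm_num) ⟨_, up5 x⟩ (by exact_mod_cast no4 x)

/-! ### transfer to the Kneser-graph model -/

def dec10 : Fin 10 → {s : Finset (Fin 5) // s.card = 2} :=
  ![⟨{0,1}, by decide⟩, ⟨{0,2}, by decide⟩, ⟨{0,3}, by decide⟩, ⟨{0,4}, by decide⟩,
    ⟨{1,2}, by decide⟩, ⟨{1,3}, by decide⟩, ⟨{1,4}, by decide⟩, ⟨{2,3}, by decide⟩,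
    ⟨{2,4}, by decide⟩, ⟨{3,4}, by decide⟩]

def enc10 (v : {s : Finset (Fin 5) // s.card = 2}) : Fin 10 :=
  if v.1 = {0,1} then 0 else if v.1 = {0,2} then 1 else if v.1 = {0,3} then 2
  else if v.1 = {0,4} then 3 else if v.1 = {1,2} then 4 else if v.1 = {1,3} then 5
  else if v.1 = {1,4} then 6 else if v.1 = {2,3} then 7 else if v.1 = {2,4} then 8 else 9

def eqv10 : Fin 10 ≃ {s : Finset (Fin 5) // s.card = 2} where
  toFun := dec10
  invFun := enc10
  left_inv := by decide
  right_inv := by decide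

lemma adj_iff : ∀ a b : Fin 10, petersen.Adj (dec10 a) (dec10 b) ↔ P10.Adj a b := by decide

def isoPV : P10 ≃g petersen where
  toEquiv := eqv10
  map_rel_iff' := by
    intro a b
    exact adj_iff a b

/-- `χρ(P) = 7` and `χρ(P − x) = 5` for every vertex `x` of the Petersen graph;
in particular `χρ(P) − χρ(P − x) = 2` for all `x`. -/
theorem stmt_8 :
    packingChromatic petersen = 7 ∧
      (∀ x, packingChromatic (deleteVert petersen x) = 5) ∧
      ∀ x, packingChromatic petersen - packingChromatic (deleteVert petersen x) = 2 := by
  have hP : packingChromatic petersen = 7 := by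
    rw [← packingChromatic_iso isoPV]
    exact pc10
  have hPx : ∀ x, packingChromatic (deleteVert petersen x) = 5 := by
    intro x
    have hx : isoPV (isoPV.toEquiv.symm x) = x := isoPV.toEquiv.apply_symm_apply x
    rw [← hx, ← packingChromatic_iso (deleteVertIso isoPV (isoPV.toEquiv.symm x))]
    exact pc10x _
  exact ⟨hP, hPx, fun x => by rw [hP, hPx x]⟩
end
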